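/- arXiv:1309.7499 — 6 statements merged into one kernel-verified Lean document; each statement's English description precedes it below -/
import Mathlib

section
/- Let n ≥ 3 and 0 < α < 2, and let B > 0 be a constant. For s, t > 0 define I(s,t) = (s+t)^{-(n-2)/2} ∫₀^{s/t} (s - t b)^{(n-2)/2} / (b^{α/2} (1+b)) db and H(s,t) = s^{-(n-α)/2} (1 - B·I(s,t)). Then ∂I/∂s (s,t) = (n-2)t / (2(s+t)^{n/2}) · ∫₀^{s/t} (s - t b)^{(n-4)/2} b^{-α/2} db > 0. -/
/-!
Write p = (n-2)/2, a = α/2 and u = s/t. The substitution b = u v turns I(s,t) into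
G(u) = (u/(u+1))^p u^(1-a) L(u) with L(u) = ∫₀¹ (1-v)^p v^(-a) (1+uv)⁻¹ dv, and the
integral in the claimed derivative into s^(p-1) u^(1-a) B with B = ∫₀¹ (1-v)^(p-1) v^(-a) dv > 0.
Differentiating L under the integral sign, the formula for ∂I/∂s reduces to the relation
(p + (1-a)(u+1)) L(u) + u(u+1) L'(u) = p B. It holds because the difference of its two sides,
written as one integral over v, has as integrand the v-derivative of (u+1)(1-v)^p v^(1-a)/(1+uv),
which vanishes at v = 0 and at v = 1.
-/

open Set intervalIntegral MeasureTheory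

theorem intervalIntegrable_one_sub_rpow_mul_rpow {e₁ e₂ : ℝ} (h₁ : -1 < e₁)
    (h₂ : -1 < e₂) :
    IntervalIntegrable (fun v => (1 - v) ^ e₁ * v ^ e₂) volume 0 1 := by
  have left : IntervalIntegrable (fun v => (1 - v) ^ e₁ * v ^ e₂) volume 0 (1 / 2) := by
    refine (intervalIntegrable_rpow' h₂).continuousOn_mul
      (ContinuousOn.rpow_const (by fun_prop) fun v hv => Or.inl ?_)
    rw [uIcc_of_le (by norm_num)] at hv
    linarith [hv.2]
  have right : IntervalIntegrable (fun v => (1 - v) ^ e₁ * v ^ e₂) volume (1 / 2) 1 := by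
    have h : IntervalIntegrable (fun v => (1 - v) ^ e₁) volume (1 / 2) 1 := by
      convert ((intervalIntegrable_rpow' (a := 0) (b := 1 / 2) h₁).comp_sub_left 1).symm
        using 1 <;> norm_num
    refine h.mul_continuousOn (ContinuousOn.rpow_const (by fun_prop) fun v hv => Or.inl ?_)
    rw [uIcc_of_le (by norm_num)] at hv
    linarith [hv.1]
  exact left.trans right

theorem integral_one_sub_rpow_mul_rpow_pos {e₁ e₂ : ℝ} (h₁ : -1 < e₁) (h₂ : -1 < e₂) :
    0 < ∫ v in (0 : ℝ)..1, (1 - v) ^ e₁ * v ^ e₂ :=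
  intervalIntegral_pos_of_pos_on (intervalIntegrable_one_sub_rpow_mul_rpow h₁ h₂)
    (fun _ hv => mul_pos (Real.rpow_pos_of_pos (sub_pos.2 hv.2) _)
      (Real.rpow_pos_of_pos hv.1 _))
    zero_lt_one

theorem integral_sub_mul_rpow_mul {s t : ℝ} (hs : 0 < s) (ht : 0 < t) (e : ℝ) (g : ℝ → ℝ) :
    ∫ b in (0 : ℝ)..s / t, (s - t * b) ^ e * g b
      = s ^ e * (s / t) * ∫ v in (0 : ℝ)..1, (1 - v) ^ e * g (s / t * v) := by
  have hc : s / t ≠ 0 := (div_pos hs ht).ne'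
  have h := intervalIntegral.integral_comp_mul_left (fun b => (s - t * b) ^ e * g b) hc
    (a := 0) (b := 1)
  rw [mul_zero, mul_one, eq_inv_smul_iff₀ hc, smul_eq_mul] at h
  rw [← h, mul_comm (s ^ e), mul_assoc]
  congr 1
  rw [← intervalIntegral.integral_const_mul]
  apply intervalIntegral.integral_congr
  intro v hv
  rw [uIcc_of_le zero_le_one] at hv
  have hsub : s - t * (s / t * v) = s * (1 - v) := by field_simp
  simp only [hsub, Real.mul_rpow hs.le (sub_nonneg.2 hv.2)]
  ring

theorem integral_sub_mul_rpow_mul_rpow_neg {s t : ℝ} (hs : 0 < s) (ht : 0 < t) (e a : ℝ) :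
    ∫ b in (0 : ℝ)..s / t, (s - t * b) ^ e * b ^ (-a)
      = s ^ e * (s / t) ^ (1 - a) * ∫ v in (0 : ℝ)..1, (1 - v) ^ e * v ^ (-a) := by
  have hc : 0 < s / t := div_pos hs ht
  have h : ∫ v in (0 : ℝ)..1, (1 - v) ^ e * (s / t * v) ^ (-a)
      = (s / t) ^ (-a) * ∫ v in (0 : ℝ)..1, (1 - v) ^ e * v ^ (-a) := by
    rw [← intervalIntegral.integral_const_mul]
    apply intervalIntegral.integral_congr
    intro v hv
    rw [uIcc_of_le zero_le_one] at hv
    simp only [Real.mul_rpow hc.le hv.1]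
    ring
  rw [integral_sub_mul_rpow_mul hs ht, h, sub_eq_add_neg, Real.rpow_add hc, Real.rpow_one]
  ring

theorem rpow_neg_mul_integral_sub_mul_rpow_div {s t : ℝ} (hs : 0 < s) (ht : 0 < t) (p a : ℝ) :
    (s + t) ^ (-p) * ∫ b in (0 : ℝ)..s / t, (s - t * b) ^ p / (b ^ a * (1 + b))
      = (s / t / (s / t + 1)) ^ p * (s / t) ^ (1 - a) *
        ∫ v in (0 : ℝ)..1, (1 - v) ^ p * v ^ (-a) * (1 + s / t * v)⁻¹ := by
  have hc : 0 < s / t := div_pos hs ht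
  have h : ∫ v in (0 : ℝ)..1, (1 - v) ^ p * ((s / t * v) ^ a * (1 + s / t * v))⁻¹
      = (s / t) ^ (-a) * ∫ v in (0 : ℝ)..1, (1 - v) ^ p * v ^ (-a) * (1 + s / t * v)⁻¹ := by
    rw [← intervalIntegral.integral_const_mul]
    apply intervalIntegral.integral_congr
    intro v hv
    rw [uIcc_of_le zero_le_one] at hv
    simp only [mul_inv, Real.mul_rpow hc.le hv.1, Real.rpow_neg hc.le, Real.rpow_neg hv.1]
    ring
  have hratio : s / t / (s / t + 1) = s / (s + t) := by field_simp
  simp only [div_eq_mul_inv ((s - t * _) ^ p)]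
  rw [integral_sub_mul_rpow_mul hs ht, h, hratio,
    Real.div_rpow hs.le (by positivity : 0 ≤ s + t) p, Real.rpow_neg (by positivity),
    sub_eq_add_neg, Real.rpow_add hc, Real.rpow_one]
  ring

theorem one_add_mul_pos_of_mem_uIcc {u v : ℝ} (hu : 0 ≤ u) (hv : v ∈ uIcc (0 : ℝ) 1) :
    0 < 1 + u * v := by
  rw [uIcc_of_le zero_le_one] at hv
  nlinarith [hv.1]

theorem hasDerivAt_integral_mul_inv_one_add_mul {w : ℝ → ℝ}
    (hw : IntervalIntegrable w volume 0 1) {x : ℝ} (hx : 0 < x) :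
    HasDerivAt (fun y => ∫ v in (0 : ℝ)..1, w v * (1 + y * v)⁻¹)
      (-∫ v in (0 : ℝ)..1, w v * (v / (1 + x * v) ^ 2)) x := by
  have hderiv : ∀ y v : ℝ, 0 < y → v ∈ uIoc (0 : ℝ) 1 →
      HasDerivAt (fun y => w v * (1 + y * v)⁻¹) (-(w v * (v / (1 + y * v) ^ 2))) y := by
    intro y v hy hv
    have hq := one_add_mul_pos_of_mem_uIcc hy.le (uIoc_subset_uIcc hv)
    simpa [neg_div, mul_div_assoc] using
      ((((hasDerivAt_id y).mul_const v).const_add 1).fun_inv hq.ne').const_mul (w v)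
  have hbound : ∀ y v : ℝ, 0 < y → v ∈ uIoc (0 : ℝ) 1 →
      ‖-(w v * (v / (1 + y * v) ^ 2))‖ ≤ ‖w v‖ := by
    intro y v hy hv
    have hq := one_add_mul_pos_of_mem_uIcc hy.le (uIoc_subset_uIcc hv)
    rw [uIoc_of_le zero_le_one] at hv
    rw [norm_neg, norm_mul, Real.norm_of_nonneg (div_nonneg hv.1.le (by positivity))]
    refine mul_le_of_le_one_right (norm_nonneg _) ((div_le_one (by positivity)).2 ?_)
    nlinarith [mul_pos hy hv.1, hv.2]
  have h := hasDerivAt_integral_of_dominated_loc_of_deriv_le (Ioi_mem_nhds hx)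
    (Filter.Eventually.of_forall fun y => hw.aestronglyMeasurable_restrict_uIoc.mul
      (by fun_prop : Measurable fun v : ℝ => (1 + y * v)⁻¹).aestronglyMeasurable)
    (hw.mul_continuousOn (ContinuousOn.inv₀ (by fun_prop)
      fun v hv => (one_add_mul_pos_of_mem_uIcc hx.le hv).ne'))
    (hw.aestronglyMeasurable_restrict_uIoc.mul
      (by fun_prop : Measurable fun v : ℝ => v / (1 + x * v) ^ 2).aestronglyMeasurable).neg
    (ae_of_all _ fun v hv y hy => hbound y v hy hv) hw.norm
    (ae_of_all _ fun v hv y hy => hderiv y v hy hv)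
  rw [← intervalIntegral.integral_neg]
  exact h.2

theorem hasDerivAt_one_sub_rpow_mul_rpow_mul_inv {p a u v : ℝ} (hu : 0 ≤ u)
    (hv : v ∈ Ioo (0 : ℝ) 1) :
    HasDerivAt (fun w => (u + 1) * ((1 - w) ^ p * w ^ (1 - a) * (1 + u * w)⁻¹))
      ((p + (1 - a) * (u + 1)) * ((1 - v) ^ p * v ^ (-a) * (1 + u * v)⁻¹)
        - u * (u + 1) * ((1 - v) ^ p * v ^ (-a) * (v / (1 + u * v) ^ 2))
        - p * ((1 - v) ^ (p - 1) * v ^ (-a))) v := by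
  obtain ⟨hv₀, hv₁⟩ := hv
  have h1v : (0 : ℝ) < 1 - v := by linarith
  have hq : 0 < 1 + u * v := by positivity
  have d₁ : HasDerivAt (fun v : ℝ => (1 - v) ^ p) (-(p * (1 - v) ^ (p - 1))) v := by
    simpa using ((hasDerivAt_id v).const_sub 1).rpow_const (p := p) (Or.inl h1v.ne')
  have d₂ : HasDerivAt (fun v : ℝ => v ^ (1 - a)) ((1 - a) * v ^ (-a)) v := by
    simpa using Real.hasDerivAt_rpow_const (x := v) (p := 1 - a) (Or.inl hv₀.ne')
  have d₃ : HasDerivAt (fun v : ℝ => (1 + u * v)⁻¹) (-(u / (1 + u * v) ^ 2)) v := by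
    simpa [neg_div] using (((hasDerivAt_id v).const_mul u).const_add 1).fun_inv hq.ne'
  refine (((d₁.fun_mul d₂).fun_mul d₃).const_mul (u + 1)).congr_deriv ?_
  rw [show (1 - v) ^ p = (1 - v) ^ (p - 1) * (1 - v) by
      rw [← Real.rpow_add_one h1v.ne', sub_add_cancel],
    show v ^ (1 - a) = v ^ (-a) * v by rw [← Real.rpow_add_one hv₀.ne', neg_add_eq_sub]]
  field_simp
  ring

theorem integral_one_sub_rpow_mul_rpow_relation {p a u : ℝ} (hp : 0 < p) (ha : a < 1)
    (hu : 0 ≤ u) :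
    (p + (1 - a) * (u + 1)) * (∫ v in (0 : ℝ)..1, (1 - v) ^ p * v ^ (-a) * (1 + u * v)⁻¹)
      - u * (u + 1) * (∫ v in (0 : ℝ)..1, (1 - v) ^ p * v ^ (-a) * (v / (1 + u * v) ^ 2))
      = p * ∫ v in (0 : ℝ)..1, (1 - v) ^ (p - 1) * v ^ (-a) := by
  have hq : ∀ v ∈ uIcc (0 : ℝ) 1, 1 + u * v ≠ 0 := fun v hv =>
    (one_add_mul_pos_of_mem_uIcc hu hv).ne'
  have hw := intervalIntegrable_one_sub_rpow_mul_rpow (e₁ := p) (e₂ := -a) (by linarith)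
    (by linarith)
  have hA : IntervalIntegrable (fun v => (1 - v) ^ p * v ^ (-a) * (1 + u * v)⁻¹) volume 0 1 :=
    hw.mul_continuousOn (ContinuousOn.inv₀ (by fun_prop) hq)
  have hB : IntervalIntegrable (fun v => (1 - v) ^ p * v ^ (-a) * (v / (1 + u * v) ^ 2))
      volume 0 1 :=
    hw.mul_continuousOn
      (ContinuousOn.div (by fun_prop) (by fun_prop) fun v hv => pow_ne_zero 2 (hq v hv))
  have hC := intervalIntegrable_one_sub_rpow_mul_rpow (e₁ := p - 1) (e₂ := -a) (by linarith)
    (by linarith)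
  have hcont : ContinuousOn (fun v => (u + 1) * ((1 - v) ^ p * v ^ (1 - a) * (1 + u * v)⁻¹))
      (Icc 0 1) := by
    refine continuousOn_const.mul (((ContinuousOn.rpow_const (by fun_prop)
      fun _ _ => Or.inr hp.le).mul (ContinuousOn.rpow_const (by fun_prop)
      fun _ _ => Or.inr (by linarith))).mul (ContinuousOn.inv₀ (by fun_prop) ?_))
    rw [← uIcc_of_le zero_le_one]
    exact hq
  have h := integral_eq_sub_of_hasDerivAt_of_le zero_le_one hcont
    (fun v hv => hasDerivAt_one_sub_rpow_mul_rpow_mul_inv hu hv)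
    (((hA.const_mul _).sub (hB.const_mul _)).sub (hC.const_mul p))
  rw [intervalIntegral.integral_sub ((hA.const_mul _).sub (hB.const_mul _)) (hC.const_mul p),
    intervalIntegral.integral_sub (hA.const_mul _) (hB.const_mul _),
    intervalIntegral.integral_const_mul, intervalIntegral.integral_const_mul,
    intervalIntegral.integral_const_mul] at h
  simp only [sub_self, Real.zero_rpow hp.ne', Real.zero_rpow (sub_ne_zero.2 ha.ne'), zero_mul,
    mul_zero, sub_zero] at h
  linarith

theorem hasDerivAt_div_add_one_rpow_mul_integral {p a u : ℝ} (hp : 0 < p) (ha : a < 1)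
    (hu : 0 < u) :
    HasDerivAt (fun u => (u / (u + 1)) ^ p * u ^ (1 - a) *
        ∫ v in (0 : ℝ)..1, (1 - v) ^ p * v ^ (-a) * (1 + u * v)⁻¹)
      (p * (u / (u + 1)) ^ p * u ^ (-a) / (u + 1) *
        ∫ v in (0 : ℝ)..1, (1 - v) ^ (p - 1) * v ^ (-a)) u := by
  have hu1 : 0 < u + 1 := by linarith
  have d₁ : HasDerivAt (fun u => (u / (u + 1)) ^ p)
      ((1 * (u + 1) - u * 1) / (u + 1) ^ 2 * p * (u / (u + 1)) ^ (p - 1)) u :=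
    ((hasDerivAt_id u).div ((hasDerivAt_id u).add_const 1) hu1.ne').rpow_const
      (Or.inl (div_pos hu hu1).ne')
  have d₂ : HasDerivAt (fun u => u ^ (1 - a)) ((1 - a) * u ^ (-a)) u := by
    simpa using Real.hasDerivAt_rpow_const (x := u) (p := 1 - a) (Or.inl hu.ne')
  have d₃ := hasDerivAt_integral_mul_inv_one_add_mul
    (intervalIntegrable_one_sub_rpow_mul_rpow (e₁ := p) (e₂ := -a) (by linarith) (by linarith))
    hu
  refine ((d₁.fun_mul d₂).fun_mul d₃).congr_deriv ?_
  have key := integral_one_sub_rpow_mul_rpow_relation hp ha hu.le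
  rw [Real.rpow_sub_one (div_pos hu hu1).ne',
    show u ^ (1 - a) = u ^ (-a) * u by rw [← Real.rpow_add_one hu.ne', neg_add_eq_sub]]
  generalize (∫ v in (0 : ℝ)..1, (1 - v) ^ p * v ^ (-a) * (1 + u * v)⁻¹) = L at key ⊢
  generalize (∫ v in (0 : ℝ)..1, (1 - v) ^ p * v ^ (-a) * (v / (1 + u * v) ^ 2)) = M at key ⊢
  field_simp
  linear_combination key

theorem stmt2_general (n : ℕ) (hn : 3 ≤ n) (α : ℝ) (hα : α ∈ Set.Ioo (0 : ℝ) 2)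
    (I : ℝ → ℝ → ℝ)
    (hI : ∀ s t : ℝ, 0 < s → 0 < t →
      I s t = (s + t) ^ (-(((n : ℝ) - 2) / 2)) *
        ∫ b in (0 : ℝ)..(s / t), (s - t * b) ^ (((n : ℝ) - 2) / 2) / (b ^ (α / 2) * (1 + b)))
    (s t : ℝ) (hs : 0 < s) (ht : 0 < t) :
    HasDerivAt (fun s' => I s' t)
      (((n : ℝ) - 2) * t / (2 * (s + t) ^ ((n : ℝ) / 2)) *
        ∫ b in (0 : ℝ)..(s / t), (s - t * b) ^ (((n : ℝ) - 4) / 2) * b ^ (-(α / 2))) s ∧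
    0 < ((n : ℝ) - 2) * t / (2 * (s + t) ^ ((n : ℝ) / 2)) *
        ∫ b in (0 : ℝ)..(s / t), (s - t * b) ^ (((n : ℝ) - 4) / 2) * b ^ (-(α / 2)) := by
  set p : ℝ := ((n : ℝ) - 2) / 2 with hp_def
  have hp : 0 < p := by
    have : (3 : ℝ) ≤ n := by exact_mod_cast hn
    linarith
  have ha : α / 2 < 1 := by linarith [hα.2]
  have hβ := integral_one_sub_rpow_mul_rpow_pos (e₁ := p - 1) (e₂ := -(α / 2)) (by linarith)
    (by linarith)
  rw [show ((n : ℝ) - 4) / 2 = p - 1 by ring, integral_sub_mul_rpow_mul_rpow_neg hs ht,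
    show (n : ℝ) - 2 = 2 * p by ring, show (n : ℝ) / 2 = p + 1 by ring,
    Real.rpow_add_one (by positivity : s + t ≠ 0)]
  refine ⟨?_, mul_pos (by positivity) (mul_pos (by positivity) hβ)⟩
  have hIG : (fun s' => I s' t) =ᶠ[nhds s] (fun u => (u / (u + 1)) ^ p * u ^ (1 - α / 2) *
      ∫ v in (0 : ℝ)..1, (1 - v) ^ p * v ^ (-(α / 2)) * (1 + u * v)⁻¹) ∘ (· / t) := by
    filter_upwards [Ioi_mem_nhds hs] with s' hs'
    rw [hI s' t hs' ht, rpow_neg_mul_integral_sub_mul_rpow_div hs' ht]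
    rfl
  have hG := (hasDerivAt_div_add_one_rpow_mul_integral hp ha (div_pos hs ht)).comp s
    ((hasDerivAt_id' s).div_const t)
  refine (hG.congr_of_eventuallyEq hIG).congr_deriv ?_
  have hratio : s / t / (s / t + 1) = s / (s + t) := by field_simp
  rw [hratio, Real.div_rpow hs.le (by positivity : 0 ≤ s + t) p, Real.rpow_sub_one hs.ne',
    sub_eq_add_neg 1, Real.rpow_add (div_pos hs ht), Real.rpow_one]
  field_simp

/-- ∂I/∂s for I(s,t) = (s+t)^{-(n-2)/2} ∫₀^{s/t} (s-tb)^{(n-2)/2}/(b^{α/2}(1+b)) db: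
it equals (n-2)t/(2(s+t)^{n/2}) ∫₀^{s/t} (s-tb)^{(n-4)/2} b^{-α/2} db, which is positive. -/
theorem stmt2 (n : ℕ) (hn : 3 ≤ n) (α B : ℝ) (hα : α ∈ Set.Ioo (0 : ℝ) 2) (hB : 0 < B)
    (I : ℝ → ℝ → ℝ)
    (hI : ∀ s t : ℝ, 0 < s → 0 < t →
      I s t = (s + t) ^ (-(((n : ℝ) - 2) / 2)) *
        ∫ b in (0 : ℝ)..(s / t), (s - t * b) ^ (((n : ℝ) - 2) / 2) / (b ^ (α / 2) * (1 + b)))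
    (s t : ℝ) (hs : 0 < s) (ht : 0 < t) :
    HasDerivAt (fun s' => I s' t)
      (((n : ℝ) - 2) * t / (2 * (s + t) ^ ((n : ℝ) / 2)) *
        ∫ b in (0 : ℝ)..(s / t), (s - t * b) ^ (((n : ℝ) - 4) / 2) * b ^ (-(α / 2))) s ∧
    0 < ((n : ℝ) - 2) * t / (2 * (s + t) ^ ((n : ℝ) / 2)) *
        ∫ b in (0 : ℝ)..(s / t), (s - t * b) ^ (((n : ℝ) - 4) / 2) * b ^ (-(α / 2)) :=
  stmt2_general n hn α hα I hI s t hs ht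
end

section
/- Let n ≥ 3 and 0 < α < 2 and s, t > 0. Define I(s,t) = (s+t)^{-(n-2)/2} ∫₀^{s/t} (s - tb)^{(n-2)/2}/(b^{α/2}(1+b)) db. Then ∂I/∂t (s,t) = -(n-2)s / (2(s+t)^{n/2}) · ∫₀^{s/t} (s - tb)^{(n-4)/2} b^{-α/2} db < 0. -/
/-!
With p = (n - 2) / 2 and q = α / 2, the substitution u = s - t b moves both integrals to the
fixed interval [0, s]: I(s, τ) = (s + τ)^(-p) τ^q M(τ) with
M(τ) = ∫₀ˢ u^p (s - u)^(-q) / (τ + s - u) du, which may be differentiated under the integral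
sign, and the target integral becomes t^(q - 1) ∫₀ˢ u^(p - 1) (s - u)^(-q) du, which is
positive.
The product rule leaves a linear combination of three integrals over [0, s]; it vanishes because
its integrand is (s + t) times the derivative of u^p (s - u)^(1 - q) / (t + s - u), a function
vanishing at both endpoints.
-/

open Set intervalIntegral MeasureTheory

theorem intervalIntegrable_rpow_mul_sub_rpow {s a c : ℝ} (hs : 0 < s) (ha : -1 < a)
    (hc : -1 < c) :
    IntervalIntegrable (fun u => u ^ a * (s - u) ^ c) volume 0 s := by
  have hmid : (0 : ℝ) ≤ s / 2 := by positivity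
  refine IntervalIntegrable.trans (b := s / 2) ?_ ?_
  · refine (intervalIntegrable_rpow' ha).mul_continuousOn ?_
    rw [uIcc_of_le hmid]
    exact (continuousOn_const.sub continuousOn_id).rpow_const fun u hu =>
      Or.inl (show 0 < s - u by linarith [hu.2]).ne'
  · have h := (intervalIntegrable_rpow' (a := 0) (b := s / 2) hc).comp_sub_left s
    rw [sub_zero, show s - s / 2 = s / 2 by ring] at h
    refine h.symm.continuousOn_mul ?_
    rw [uIcc_of_le (by linarith)]
    exact continuousOn_id.rpow_const fun u hu => Or.inl (show 0 < u by linarith [hu.1]).ne'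

theorem hasDerivAt_integral_mul_inv_add {g h : ℝ → ℝ} {a b t : ℝ}
    (hg : IntervalIntegrable g volume a b) (hh : ContinuousOn h (uIcc a b))
    (hh0 : ∀ u ∈ uIcc a b, 0 ≤ h u) (ht : 0 < t) :
    HasDerivAt (fun τ => ∫ u in a..b, g u * (τ + h u)⁻¹)
      (-∫ u in a..b, g u * ((t + h u) ^ 2)⁻¹) t := by
  have hpos : ∀ τ > 0, ∀ u ∈ uIcc a b, 0 < τ + h u := fun τ hτ u hu => by
    linarith [hh0 u hu]
  have hint : ∀ τ > 0, IntervalIntegrable (fun u => g u * (τ + h u)⁻¹) volume a b :=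
    fun τ hτ => hg.mul_continuousOn <|
      (continuousOn_const.add hh).inv₀ fun u hu => (hpos τ hτ u hu).ne'
  have hint' : IntervalIntegrable (fun u => g u * ((t + h u) ^ 2)⁻¹) volume a b :=
    hg.mul_continuousOn <|
      ((continuousOn_const.add hh).pow 2).inv₀ fun u hu => pow_ne_zero 2 (hpos t ht u hu).ne'
  have hball : Metric.ball t (t / 2) ⊆ Ioi (t / 2) := fun τ hτ => by
    rw [Metric.mem_ball, Real.dist_eq, abs_lt] at hτ
    exact show t / 2 < τ by linarith
  have key := hasDerivAt_integral_of_dominated_loc_of_deriv_le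
    (F := fun τ u => g u * (τ + h u)⁻¹) (F' := fun τ u => -(g u * ((τ + h u) ^ 2)⁻¹))
    (bound := fun u => ‖g u‖ * ((t / 2) ^ 2)⁻¹)
    (Metric.ball_mem_nhds t (half_pos ht))
    (Filter.eventually_of_mem (Ioi_mem_nhds ht) fun τ hτ =>
      (hint τ hτ).def'.aestronglyMeasurable)
    (hint t ht) hint'.neg.def'.aestronglyMeasurable ?_ (hg.norm.mul_const _) ?_
  · simpa only [intervalIntegral.integral_neg] using key.2
  · refine Filter.Eventually.of_forall fun u hu τ hτ => ?_
    have hd : t / 2 < τ + h u := by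
      linarith [hh0 u (uIoc_subset_uIcc hu), show t / 2 < τ from hball hτ]
    rw [norm_neg, norm_mul, norm_inv, norm_pow, Real.norm_of_nonneg (by linarith : 0 ≤ τ + h u)]
    gcongr
  · refine Filter.Eventually.of_forall fun u hu τ hτ => ?_
    have hd : 0 < τ + h u := by
      linarith [hh0 u (uIoc_subset_uIcc hu), show t / 2 < τ from hball hτ, half_pos ht]
    have := (((hasDerivAt_id τ).add_const (h u)).inv hd.ne').const_mul (g u)
    simp only [id_eq, div_eq_mul_inv, neg_mul, one_mul, mul_neg] at this
    exact this

theorem integral_zero_div_eq_inv_mul_integral (f : ℝ → ℝ) (s : ℝ) {t : ℝ} (ht : t ≠ 0) :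
    ∫ b in (0 : ℝ)..s / t, f b = t⁻¹ * ∫ u in (0 : ℝ)..s, f ((s - u) / t) := by
  have h := integral_comp_sub_div f ht (s / t) (a := 0) (b := s)
  simp only [sub_self, zero_div, sub_zero, smul_eq_mul] at h
  simp only [sub_div, h, inv_mul_cancel_left₀ ht]

section

variable {s t p q : ℝ}

theorem hasDerivAt_rpow_mul_sub_rpow_div_add (ht : 0 < t) {u : ℝ} (hu : u ∈ Ioo 0 s) :
    HasDerivAt (fun v => (s + t) * (v ^ p * (s - v) ^ (1 - q) * (t + (s - v))⁻¹))
      ((q * (s + t) - p * t) * (u ^ p * (s - u) ^ (-q) * (t + (s - u))⁻¹)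
        - (s + t) * t * (u ^ p * (s - u) ^ (-q) * ((t + (s - u)) ^ 2)⁻¹)
        + p * s * (u ^ (p - 1) * (s - u) ^ (-q))) u := by
  obtain ⟨hu0, hus⟩ := hu
  have hx : 0 < s - u := sub_pos.2 hus
  have hd : 0 < t + (s - u) := by linarith
  have hsub : HasDerivAt (fun v => s - v) (-1) u := by simpa using (hasDerivAt_id u).const_sub s
  have h1 := Real.hasDerivAt_rpow_const (p := p) (Or.inl hu0.ne')
  have h2 := hsub.rpow_const (p := 1 - q) (Or.inl hx.ne')
  have h3 := (hsub.const_add t).inv hd.ne'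
  refine (((h1.mul h2).mul h3).const_mul (s + t)).congr_deriv ?_
  have hsplit : (s - u) ^ (1 - q) = (s - u) * (s - u) ^ (-q) := by
    rw [sub_eq_add_neg 1 q, Real.rpow_add hx, Real.rpow_one]
  simp only [Pi.mul_apply, Pi.inv_apply]
  rw [show 1 - q - 1 = -q by ring, Real.rpow_sub_one hu0.ne', hsplit]
  field_simp
  ring

theorem integral_rpow_mul_sub_rpow_inv_add_relation (hp : 0 < p) (hq : q < 1) (hs : 0 < s)
    (ht : 0 < t) :
    (q * (s + t) - p * t) * (∫ u in (0 : ℝ)..s, u ^ p * (s - u) ^ (-q) * (t + (s - u))⁻¹)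
      - (s + t) * t * (∫ u in (0 : ℝ)..s, u ^ p * (s - u) ^ (-q) * ((t + (s - u)) ^ 2)⁻¹)
      + p * s * (∫ u in (0 : ℝ)..s, u ^ (p - 1) * (s - u) ^ (-q)) = 0 := by
  have hd : ∀ u ∈ Icc 0 s, t + (s - u) ≠ 0 := fun u hu => by linarith [hu.2]
  have hd_cont : ContinuousOn (fun u => t + (s - u)) (Icc 0 s) :=
    continuousOn_const.add (continuousOn_const.sub continuousOn_id)
  have hw := intervalIntegrable_rpow_mul_sub_rpow (a := p) (c := -q) hs (by linarith)
    (by linarith)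
  have hM := hw.mul_continuousOn (g := fun u => (t + (s - u))⁻¹)
    (uIcc_of_le hs.le ▸ hd_cont.inv₀ hd)
  have hP := hw.mul_continuousOn (g := fun u => ((t + (s - u)) ^ 2)⁻¹)
    (uIcc_of_le hs.le ▸ (hd_cont.pow 2).inv₀ fun u hu => pow_ne_zero 2 (hd u hu))
  have hN := intervalIntegrable_rpow_mul_sub_rpow (a := p - 1) (c := -q) hs (by linarith)
    (by linarith)
  have hφ : ContinuousOn (fun v => (s + t) * (v ^ p * (s - v) ^ (1 - q) * (t + (s - v))⁻¹))
      (Icc 0 s) := by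
    refine continuousOn_const.mul (ContinuousOn.mul (ContinuousOn.mul ?_ ?_) (hd_cont.inv₀ hd))
    · exact continuousOn_id.rpow_const fun _ _ => Or.inr hp.le
    · exact (continuousOn_const.sub continuousOn_id).rpow_const fun _ _ => Or.inr (by linarith)
  have hftc := integral_eq_sub_of_hasDerivAt_of_le hs.le hφ
    (fun u hu => hasDerivAt_rpow_mul_sub_rpow_div_add ht hu)
    (((hM.const_mul _).sub (hP.const_mul _)).add (hN.const_mul _))
  rw [integral_add ((hM.const_mul _).sub (hP.const_mul _)) (hN.const_mul _),
    integral_sub (hM.const_mul _) (hP.const_mul _), intervalIntegral.integral_const_mul,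
    intervalIntegral.integral_const_mul, intervalIntegral.integral_const_mul] at hftc
  rw [hftc, sub_self, Real.zero_rpow hp.ne', Real.zero_rpow (by linarith : 1 - q ≠ 0)]
  simp

theorem integral_sub_mul_rpow_div_eq (hs : 0 ≤ s) (ht : 0 < t) :
    ∫ b in (0 : ℝ)..s / t, (s - t * b) ^ p / (b ^ q * (1 + b))
      = t ^ q * ∫ u in (0 : ℝ)..s, u ^ p * (s - u) ^ (-q) * (t + (s - u))⁻¹ := by
  rw [integral_zero_div_eq_inv_mul_integral _ _ ht.ne', ← intervalIntegral.integral_const_mul,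
    ← intervalIntegral.integral_const_mul]
  refine integral_congr fun u hu => ?_
  rw [uIcc_of_le hs] at hu
  have hx : 0 ≤ s - u := sub_nonneg.2 hu.2
  have hd : t + (s - u) ≠ 0 := by linarith
  rw [Real.div_rpow hx ht.le, Real.rpow_neg hx, show s - t * ((s - u) / t) = u by field_simp; ring,
    show 1 + (s - u) / t = (t + (s - u)) / t by field_simp]
  field_simp

theorem integral_sub_mul_rpow_mul_rpow_neg_eq (hs : 0 ≤ s) (ht : 0 < t) :
    ∫ b in (0 : ℝ)..s / t, (s - t * b) ^ (p - 1) * b ^ (-q)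
      = t ^ (q - 1) * ∫ u in (0 : ℝ)..s, u ^ (p - 1) * (s - u) ^ (-q) := by
  rw [integral_zero_div_eq_inv_mul_integral _ _ ht.ne', ← intervalIntegral.integral_const_mul,
    ← intervalIntegral.integral_const_mul]
  refine integral_congr fun u hu => ?_
  rw [uIcc_of_le hs] at hu
  rw [Real.div_rpow (sub_nonneg.2 hu.2) ht.le, Real.rpow_neg ht.le,
    show s - t * ((s - u) / t) = u by field_simp; ring, Real.rpow_sub_one ht.ne']
  field_simp

theorem hasDerivAt_rpow_mul_integral (hp : 0 < p) (hq : q < 1) (hs : 0 < s) (ht : 0 < t) :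
    HasDerivAt
      (fun τ => (s + τ) ^ (-p) * ∫ b in (0 : ℝ)..s / τ, (s - τ * b) ^ p / (b ^ q * (1 + b)))
      (-(p * s / (s + t) ^ (p + 1)) * ∫ b in (0 : ℝ)..s / t, (s - t * b) ^ (p - 1) * b ^ (-q))
      t := by
  have hst : 0 < s + t := by linarith
  have hM := hasDerivAt_integral_mul_inv_add (g := fun u => u ^ p * (s - u) ^ (-q))
    (h := fun u => s - u) (intervalIntegrable_rpow_mul_sub_rpow hs (by linarith) (by linarith))
    (continuousOn_const.sub continuousOn_id)
    (fun u hu => by rw [uIcc_of_le hs.le] at hu; linarith [hu.2]) ht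
  have hprod := (((hasDerivAt_id t).const_add s).rpow_const (p := -p) (Or.inl hst.ne')).mul
    ((Real.hasDerivAt_rpow_const (p := q) (Or.inl ht.ne')).mul hM)
  have hev :
      (fun τ => (s + τ) ^ (-p) * ∫ b in (0 : ℝ)..s / τ, (s - τ * b) ^ p / (b ^ q * (1 + b)))
      =ᶠ[nhds t] fun τ => (s + τ) ^ (-p) *
        (τ ^ q * ∫ u in (0 : ℝ)..s, u ^ p * (s - u) ^ (-q) * (τ + (s - u))⁻¹) := by
    filter_upwards [Ioi_mem_nhds ht] with τ hτ
    rw [integral_sub_mul_rpow_div_eq hs.le hτ]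
  rw [integral_sub_mul_rpow_mul_rpow_neg_eq hs.le ht]
  refine (hprod.congr_of_eventuallyEq hev).congr_deriv ?_
  have key := integral_rpow_mul_sub_rpow_inv_add_relation hp hq hs ht
  simp only [id_eq, Pi.mul_apply]
  generalize (∫ u in (0 : ℝ)..s, u ^ p * (s - u) ^ (-q) * (t + (s - u))⁻¹) = M at key ⊢
  generalize (∫ u in (0 : ℝ)..s, u ^ p * (s - u) ^ (-q) * ((t + (s - u)) ^ 2)⁻¹) = P
    at key ⊢
  generalize (∫ u in (0 : ℝ)..s, u ^ (p - 1) * (s - u) ^ (-q)) = N at key ⊢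
  rw [Real.rpow_sub_one hst.ne', Real.rpow_add_one hst.ne', Real.rpow_neg hst.le,
    Real.rpow_sub_one ht.ne']
  field_simp
  linear_combination key

theorem integral_sub_mul_rpow_mul_rpow_neg_pos (hp : 0 < p) (hq : q < 1) (hs : 0 < s)
    (ht : 0 < t) : 0 < ∫ b in (0 : ℝ)..s / t, (s - t * b) ^ (p - 1) * b ^ (-q) := by
  rw [integral_sub_mul_rpow_mul_rpow_neg_eq hs.le ht]
  refine mul_pos (Real.rpow_pos_of_pos ht _) (intervalIntegral_pos_of_pos_on
    (intervalIntegrable_rpow_mul_sub_rpow hs (by linarith) (by linarith)) (fun u hu => ?_) hs)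
  exact mul_pos (Real.rpow_pos_of_pos hu.1 _) (Real.rpow_pos_of_pos (sub_pos.2 hu.2) _)

end

/-- ∂I/∂t for I(s,t) = (s+t)^{-(n-2)/2} ∫₀^{s/t} (s-tb)^{(n-2)/2}/(b^{α/2}(1+b)) db:
it equals -(n-2)s/(2(s+t)^{n/2}) ∫₀^{s/t} (s-tb)^{(n-4)/2} b^{-α/2} db, which is negative. -/
theorem stmt3 (n : ℕ) (hn : 3 ≤ n) (α : ℝ) (hα : α ∈ Set.Ioo (0 : ℝ) 2)
    (I : ℝ → ℝ → ℝ)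
    (hI : ∀ s t : ℝ, 0 < s → 0 < t →
      I s t = (s + t) ^ (-(((n : ℝ) - 2) / 2)) *
        ∫ b in (0 : ℝ)..(s / t), (s - t * b) ^ (((n : ℝ) - 2) / 2) / (b ^ (α / 2) * (1 + b)))
    (s t : ℝ) (hs : 0 < s) (ht : 0 < t) :
    HasDerivAt (fun t' => I s t')
      (-(((n : ℝ) - 2) * s / (2 * (s + t) ^ ((n : ℝ) / 2))) *
        ∫ b in (0 : ℝ)..(s / t), (s - t * b) ^ (((n : ℝ) - 4) / 2) * b ^ (-(α / 2))) t ∧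
    -(((n : ℝ) - 2) * s / (2 * (s + t) ^ ((n : ℝ) / 2))) *
        ∫ b in (0 : ℝ)..(s / t), (s - t * b) ^ (((n : ℝ) - 4) / 2) * b ^ (-(α / 2)) < 0 := by
  have hp : 0 < ((n : ℝ) - 2) / 2 := by
    have : (3 : ℝ) ≤ n := by exact_mod_cast hn
    linarith
  set p : ℝ := ((n : ℝ) - 2) / 2
  have hq : α / 2 < 1 := by linarith [hα.2]
  have hcoef :
      ((n : ℝ) - 2) * s / (2 * (s + t) ^ ((n : ℝ) / 2)) = p * s / (s + t) ^ (p + 1) := by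
    rw [show (n : ℝ) / 2 = p + 1 by ring]
    ring
  rw [hcoef, show ((n : ℝ) - 4) / 2 = p - 1 by ring]
  refine ⟨(hasDerivAt_rpow_mul_integral hp hq hs ht).congr_of_eventuallyEq ?_, ?_⟩
  · filter_upwards [Ioi_mem_nhds ht] with τ hτ using hI s τ hs hτ
  · rw [neg_mul, neg_lt_zero]
    exact mul_pos (by positivity) (integral_sub_mul_rpow_mul_rpow_neg_pos hp hq hs ht)
end

section
/- Let n ≥ 3, 0 < α < 2, B > 0, and suppose H(s,t) = s^{-(n-α)/2}(1 - B·I(s,t)) with I as above, and suppose 1 - B·I(s,t) ≥ 0 for all s,t > 0 (nonnegativity of the Green's function). Then for all s, t > 0, ∂H/∂s (s,t) < 0 and ∂H/∂t (s,t) > 0. -/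
/-!
Substituting `b = (s/t) u` shows `I(s,t) = G(s/t)` with `G(λ) = λ^(p+1-a) (1+λ)^(-p) J(λ)`,
where `a = α/2`, `p = (n-2)/2` and `J(λ) = ∫₀¹ u^(-a) (1-u)^p / (1+λu) du`. Differentiating under
the integral and integrating by parts in `u` gives
`G'(λ) = p λ^(p-a) (1+λ)^(-p-1) (J(λ) + (1+λ) ∫₀¹ u^(1-a) (1-u)^(p-1) / (1+λu) du) > 0`.
Hence `∂ₜ H = s^(-(n-α)/2) B G'(s/t) s/t² > 0`, while in
`∂ₛ H = -((n-α)/2) s^(-(n-α)/2-1) (1 - B G(s/t)) - s^(-(n-α)/2) B G'(s/t)/t`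
the first term is `≤ 0` precisely because `B I ≤ 1`.
-/

open Set intervalIntegral MeasureTheory

lemma intervalIntegrable_rpow_mul_one_sub_rpow_mul {a b : ℝ} (ha : -1 < a) (hb : -1 < b)
    {ρ : ℝ → ℝ} (hρ : ContinuousOn ρ (Icc 0 1)) :
    IntervalIntegrable (fun u : ℝ => u ^ a * (1 - u) ^ b * ρ u) volume 0 1 := by
  have hleft : IntervalIntegrable (fun u : ℝ => u ^ a * ((1 - u) ^ b * ρ u)) volume 0 (1 / 2) := by
    refine (intervalIntegral.intervalIntegrable_rpow' ha).mul_continuousOn ?_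
    rw [uIcc_of_le (by norm_num)]
    refine ContinuousOn.mul (fun x hx => ?_) (hρ.mono fun x hx => ⟨hx.1, by linarith [hx.2]⟩)
    exact (continuousAt_const.sub continuousAt_id).rpow_const
      (Or.inl (by linarith [hx.2] : (0:ℝ) < 1 - x).ne') |>.continuousWithinAt
  have hright : IntervalIntegrable (fun u : ℝ => (1 - u) ^ b * (u ^ a * ρ u)) volume (1 / 2) 1 := by
    refine IntervalIntegrable.mul_continuousOn ?_ ?_
    · have := (intervalIntegral.intervalIntegrable_rpow' (a := 1 / 2) (b := 0) hb).comp_sub_left 1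
      norm_num at this
      exact this
    · rw [uIcc_of_le (by norm_num)]
      refine ContinuousOn.mul (fun x hx => ?_) (hρ.mono fun x hx => ⟨by linarith [hx.1], hx.2⟩)
      exact continuousAt_id.rpow_const (Or.inl (by linarith [hx.1] : (0:ℝ) < x).ne')
        |>.continuousWithinAt
  refine (hleft.congr fun x _ => ?_).trans (hright.congr fun x _ => ?_) <;> ring

noncomputable def weightedBeta (a b : ℝ) (c : ℕ) (l : ℝ) : ℝ :=
  ∫ u in (0 : ℝ)..1, u ^ a * (1 - u) ^ b / (1 + l * u) ^ c

section weightedBeta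

variable {a b l : ℝ}

lemma intervalIntegrable_weightedBeta (ha : -1 < a) (hb : -1 < b) (c : ℕ) (hl : 0 ≤ l) :
    IntervalIntegrable (fun u : ℝ => u ^ a * (1 - u) ^ b / (1 + l * u) ^ c) volume 0 1 := by
  simpa only [div_eq_mul_inv] using intervalIntegrable_rpow_mul_one_sub_rpow_mul ha hb
    (ρ := fun u => ((1 + l * u) ^ c)⁻¹)
    (ContinuousOn.inv₀ (by fun_prop) fun u hu => pow_ne_zero _ (by nlinarith [hu.1]))

lemma weightedBeta_pos (ha : -1 < a) (hb : -1 < b) (c : ℕ) (hl : 0 ≤ l) :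
    0 < weightedBeta a b c l := by
  refine intervalIntegral_pos_of_pos_on (intervalIntegrable_weightedBeta ha hb c hl)
    (fun u hu => ?_) zero_lt_one
  have : 0 < 1 + l * u := by nlinarith [hu.1]
  have : 0 < (1 - u) ^ b := Real.rpow_pos_of_pos (by linarith [hu.2]) _
  have : 0 < u ^ a := Real.rpow_pos_of_pos hu.1 _
  positivity

lemma hasDerivAt_weightedBeta_one (ha : -1 < a) (hb : -1 < b) (hl : 0 < l) :
    HasDerivAt (weightedBeta a b 1) (-weightedBeta (a + 1) b 2 l) l := by
  have hderiv : ∀ u ∈ Ioc (0 : ℝ) 1, ∀ x ∈ Ioi (0 : ℝ),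
      HasDerivAt (fun x => u ^ a * (1 - u) ^ b / (1 + x * u) ^ 1)
        (-(u ^ (a + 1) * (1 - u) ^ b / (1 + x * u) ^ 2)) x := by
    intro u hu x hx
    have hden : 1 + x * u ≠ 0 := by nlinarith [hu.1, mem_Ioi.1 hx]
    refine (hasDerivAt_const x (u ^ a * (1 - u) ^ b)).div
      (((hasDerivAt_mul_const u).const_add 1).pow 1) (pow_ne_zero 1 hden) |>.congr_deriv ?_
    simp only [Real.rpow_add_one hu.1.ne', Pi.pow_apply, pow_one]
    ring
  have hbound : ∀ u ∈ Ioc (0 : ℝ) 1, ∀ x ∈ Ioi (0 : ℝ),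
      ‖-(u ^ (a + 1) * (1 - u) ^ b / (1 + x * u) ^ 2)‖ ≤ u ^ (a + 1) * (1 - u) ^ b := by
    intro u hu x hx
    have : 0 ≤ u ^ (a + 1) * (1 - u) ^ b :=
      mul_nonneg (Real.rpow_nonneg hu.1.le _) (Real.rpow_nonneg (by linarith [hu.2]) _)
    rw [norm_neg, Real.norm_of_nonneg (by positivity)]
    exact div_le_self this (one_le_pow₀ (by nlinarith [hu.1, mem_Ioi.1 hx]))
  have hmain := intervalIntegral.hasDerivAt_integral_of_dominated_loc_of_deriv_le
    (F := fun x u => u ^ a * (1 - u) ^ b / (1 + x * u) ^ 1)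
    (F' := fun x u => -(u ^ (a + 1) * (1 - u) ^ b / (1 + x * u) ^ 2))
    (Ioi_mem_nhds hl) (.of_forall fun x => (by fun_prop : Measurable _).aestronglyMeasurable)
    (intervalIntegrable_weightedBeta ha hb 1 hl.le)
    ((by fun_prop : Measurable _).aestronglyMeasurable)
    (.of_forall fun u hu => by rw [uIoc_of_le zero_le_one] at hu; exact hbound u hu)
    (by simpa using intervalIntegrable_weightedBeta (by linarith) hb 0 le_rfl)
    (.of_forall fun u hu => by rw [uIoc_of_le zero_le_one] at hu; exact hderiv u hu)
  rw [intervalIntegral.integral_neg] at hmain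
  exact hmain.2

lemma weightedBeta_integration_by_parts (ha : -1 < a) (hb : 0 < b) (hl : 0 ≤ l) :
    (a + 1) * weightedBeta a b 1 l =
      b * weightedBeta (a + 1) (b - 1) 1 l + l * weightedBeta (a + 1) b 2 l := by
  set f : ℝ → ℝ := fun u => u ^ (a + 1) * (1 - u) ^ b / (1 + l * u)
  set f' : ℝ → ℝ := fun u => (a + 1) * (u ^ a * (1 - u) ^ b / (1 + l * u) ^ 1)
    - b * (u ^ (a + 1) * (1 - u) ^ (b - 1) / (1 + l * u) ^ 1)
    - l * (u ^ (a + 1) * (1 - u) ^ b / (1 + l * u) ^ 2)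
  have hcont : ContinuousOn f (Icc 0 1) := by
    refine ContinuousOn.div (ContinuousOn.mul ?_ ?_) (by fun_prop) fun u hu => by nlinarith [hu.1]
    · exact (Real.continuous_rpow_const (by linarith)).continuousOn
    · exact ((Real.continuous_rpow_const hb.le).comp (continuous_const.sub continuous_id)).continuousOn
  have hderiv : ∀ u ∈ Ioo (0 : ℝ) 1, HasDerivAt f (f' u) u := by
    intro u hu
    have hden : 1 + l * u ≠ 0 := by nlinarith [hu.1]
    have h1u : 1 - u ≠ 0 := by linarith [hu.2]
    refine ((Real.hasDerivAt_rpow_const (p := a + 1) (Or.inl hu.1.ne')).mul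
      (((hasDerivAt_id' u).const_sub 1).rpow_const (p := b) (Or.inl h1u))).div
      ((hasDerivAt_id' u).const_mul l |>.const_add 1) hden |>.congr_deriv ?_
    simp only [f', Pi.mul_apply, add_sub_cancel_right, Real.rpow_add_one hu.1.ne',
      Real.rpow_sub_one h1u, pow_one]
    field_simp
    ring
  have i1 := (intervalIntegrable_weightedBeta (b := b) ha (by linarith) 1 hl).const_mul (a + 1)
  have i2 := (intervalIntegrable_weightedBeta (a := a + 1) (b := b - 1)
    (by linarith) (by linarith) 1 hl).const_mul b
  have i3 := (intervalIntegrable_weightedBeta (a := a + 1) (b := b)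
    (by linarith) (by linarith) 2 hl).const_mul l
  have hftc := integral_eq_sub_of_hasDerivAt_of_le zero_le_one hcont hderiv ((i1.sub i2).sub i3)
  simp only [f, f', sub_self, Real.zero_rpow hb.ne', Real.zero_rpow (by linarith : a + 1 ≠ 0),
    mul_zero, zero_mul, zero_div, sub_zero] at hftc
  rw [intervalIntegral.integral_sub (i1.sub i2) i3, intervalIntegral.integral_sub i1 i2,
    intervalIntegral.integral_const_mul, intervalIntegral.integral_const_mul,
    intervalIntegral.integral_const_mul] at hftc
  unfold weightedBeta
  linarith

end weightedBeta

noncomputable def greenProfile (a p l : ℝ) : ℝ :=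
  l ^ (p + 1 - a) * (1 + l) ^ (-p) * weightedBeta (-a) p 1 l

section greenProfile

variable {a p l : ℝ}

lemma hasDerivAt_greenProfile (ha : a < 1) (hp : 0 < p) (hl : 0 < l) :
    HasDerivAt (greenProfile a p) (p * l ^ (p - a) * (1 + l) ^ (-p - 1) *
      (weightedBeta (-a) p 1 l + (1 + l) * weightedBeta (1 - a) (p - 1) 1 l)) l := by
  have h1l : 0 < 1 + l := by linarith
  have hpow : HasDerivAt (fun x => x ^ (p + 1 - a)) ((p + 1 - a) * l ^ (p + 1 - a - 1)) l :=
    Real.hasDerivAt_rpow_const (Or.inl hl.ne')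
  have hpow' : HasDerivAt (fun x => (1 + x) ^ (-p)) (1 * -p * (1 + l) ^ (-p - 1)) l :=
    ((hasDerivAt_id' l).const_add 1).rpow_const (Or.inl h1l.ne')
  have hJ := hasDerivAt_weightedBeta_one (a := -a) (b := p) (by linarith) (by linarith) hl
  have hparts := weightedBeta_integration_by_parts (a := -a) (b := p) (by linarith) hp hl.le
  rw [neg_add_eq_sub] at hJ hparts
  refine (hpow.mul hpow').mul hJ |>.congr_deriv ?_
  have e1 : l ^ (p + 1 - a) = l ^ (p - a) * l := by
    rw [← Real.rpow_add_one hl.ne']; ring_nf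
  have e2 : (1 + l) ^ (-p) = (1 + l) ^ (-p - 1) * (1 + l) := by
    rw [← Real.rpow_add_one h1l.ne']; ring_nf
  simp only [Pi.mul_apply]
  rw [show p + 1 - a - 1 = p - a by ring, e1, e2]
  -- `hparts` trades the `(1 + l * u)⁻²` integral from differentiating `J` for two positive ones
  linear_combination l ^ (p - a) * (1 + l) ^ (-p - 1) * (1 + l) * hparts

lemma exists_hasDerivAt_greenProfile_pos (ha : a < 1) (hp : 0 < p) (hl : 0 < l) :
    ∃ d, HasDerivAt (greenProfile a p) d l ∧ 0 < d := by
  refine ⟨_, hasDerivAt_greenProfile ha hp hl, ?_⟩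
  have := weightedBeta_pos (a := -a) (b := p) (by linarith) (by linarith) 1 hl.le
  have := weightedBeta_pos (a := 1 - a) (b := p - 1) (by linarith) (by linarith) 1 hl.le
  have := Real.rpow_pos_of_pos hl (p - a)
  have := Real.rpow_pos_of_pos (by linarith : 0 < 1 + l) (-p - 1)
  have : 0 < 1 + l := by linarith
  positivity

end greenProfile

lemma integral_eq_greenProfile (a p : ℝ) {s t : ℝ} (hs : 0 < s) (ht : 0 < t) :
    (s + t) ^ (-p) * ∫ b in (0 : ℝ)..(s / t), (s - t * b) ^ p / (b ^ a * (1 + b)) =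
      greenProfile a p (s / t) := by
  obtain ⟨l, hl, rfl⟩ : ∃ l, 0 < l ∧ s = t * l := ⟨s / t, div_pos hs ht, by field_simp⟩
  rw [mul_div_cancel_left₀ _ ht.ne']
  have hsubst := intervalIntegral.smul_integral_comp_mul_left
    (fun b => (t * l - t * b) ^ p / (b ^ a * (1 + b))) l (a := 0) (b := 1)
  rw [mul_zero, mul_one] at hsubst
  have hcongr : EqOn (fun u => (t * l - t * (l * u)) ^ p / ((l * u) ^ a * (1 + l * u)))
      (fun u => (t * l) ^ p * l ^ (-a) * (u ^ (-a) * (1 - u) ^ p / (1 + l * u) ^ 1))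
      (uIcc 0 1) := by
    intro u hu
    rw [uIcc_of_le zero_le_one] at hu
    dsimp only
    rw [show t * l - t * (l * u) = t * l * (1 - u) by ring,
      Real.mul_rpow (by positivity) (by linarith [hu.2]), Real.mul_rpow hl.le hu.1,
      Real.rpow_neg hl.le, Real.rpow_neg hu.1]
    simp only [div_eq_mul_inv, mul_inv, pow_one]
    ring
  rw [← hsubst, intervalIntegral.integral_congr hcongr, intervalIntegral.integral_const_mul,
    smul_eq_mul, greenProfile, weightedBeta, show t * l + t = t * (1 + l) by ring,
    Real.mul_rpow ht.le (by linarith), Real.mul_rpow ht.le hl.le, Real.rpow_neg ht.le,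
    show p + 1 - a = p + -a + 1 by ring, Real.rpow_add_one hl.ne', Real.rpow_add hl]
  have : 0 < t ^ p := Real.rpow_pos_of_pos ht p
  field_simp

section signs

variable {G : ℝ → ℝ} {q B s t d : ℝ}

lemma exists_hasDerivAt_rpow_mul_one_sub_comp_div_left_neg (hq : 0 < q) (hB : 0 < B)
    (hs : 0 < s) (ht : 0 < t) (hG : HasDerivAt G d (s / t)) (hd : 0 < d)
    (hBG : B * G (s / t) ≤ 1) :
    ∃ d', HasDerivAt (fun s' => s' ^ (-q) * (1 - B * G (s' / t))) d' s ∧ d' < 0 := by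
  refine ⟨_, (Real.hasDerivAt_rpow_const (Or.inl hs.ne')).mul
    (((hG.comp s ((hasDerivAt_id' s).div_const t)).const_mul B).const_sub 1), ?_⟩
  have h1 := Real.rpow_pos_of_pos hs (-q - 1)
  have h2 := Real.rpow_pos_of_pos hs (-q)
  have h3 : 0 < B * (d * (1 / t)) := by positivity
  nlinarith [mul_nonneg (mul_nonneg hq.le h1.le) (sub_nonneg.2 hBG), mul_pos h2 h3]

lemma exists_hasDerivAt_rpow_mul_one_sub_comp_div_right_pos (hB : 0 < B)
    (hs : 0 < s) (ht : 0 < t) (hG : HasDerivAt G d (s / t)) (hd : 0 < d) :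
    ∃ d', HasDerivAt (fun t' => s ^ (-q) * (1 - B * G (s / t'))) d' t ∧ 0 < d' := by
  have hdiv : HasDerivAt (fun t' => s / t') (-(s / t ^ 2)) t := by
    simpa [div_eq_mul_inv] using (hasDerivAt_inv ht.ne').const_mul s
  refine ⟨_, (((hG.comp t hdiv).const_mul B).const_sub 1).const_mul (s ^ (-q)), ?_⟩
  have := Real.rpow_pos_of_pos hs (-q)
  have : 0 < s ^ (-q) * (B * (d * (s / t ^ 2))) := by positivity
  linarith

end signs

/-- For H(s,t) = s^{-(n-α)/2}(1 - B·I(s,t)), with the Green's function nonnegativity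
B·I ≤ 1, one has ∂H/∂s < 0 and ∂H/∂t > 0 for all s,t > 0. -/
theorem stmt4 (n : ℕ) (hn : 3 ≤ n) (α B : ℝ) (hα : α ∈ Set.Ioo (0 : ℝ) 2) (hB : 0 < B)
    (I H : ℝ → ℝ → ℝ)
    (hI : ∀ s t : ℝ, 0 < s → 0 < t →
      I s t = (s + t) ^ (-(((n : ℝ) - 2) / 2)) *
        ∫ b in (0 : ℝ)..(s / t), (s - t * b) ^ (((n : ℝ) - 2) / 2) / (b ^ (α / 2) * (1 + b)))
    (hH : ∀ s t : ℝ, 0 < s → 0 < t →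
      H s t = s ^ (-(((n : ℝ) - α) / 2)) * (1 - B * I s t))
    (hpos : ∀ s t : ℝ, 0 < s → 0 < t → B * I s t ≤ 1) :
    ∀ s t : ℝ, 0 < s → 0 < t →
      (∃ d : ℝ, HasDerivAt (fun s' => H s' t) d s ∧ d < 0) ∧
      (∃ d : ℝ, HasDerivAt (fun t' => H s t') d t ∧ 0 < d) := by
  intro s t hs ht
  have hn' : (3 : ℝ) ≤ n := by exact_mod_cast hn
  have hIG : ∀ s t, 0 < s → 0 < t → I s t = greenProfile (α / 2) (((n : ℝ) - 2) / 2) (s / t) :=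
    fun s t hs ht => (hI s t hs ht).trans (integral_eq_greenProfile _ _ hs ht)
  obtain ⟨d, hG, hd⟩ := exists_hasDerivAt_greenProfile_pos (a := α / 2) (p := ((n : ℝ) - 2) / 2)
    (by linarith [hα.2]) (by linarith) (div_pos hs ht)
  constructor
  · obtain ⟨d', hd', hneg⟩ := exists_hasDerivAt_rpow_mul_one_sub_comp_div_left_neg
      (q := ((n : ℝ) - α) / 2) (by linarith [hα.2]) hB hs ht hG hd
      (hIG s t hs ht ▸ hpos s t hs ht)
    refine ⟨d', hd'.congr_of_eventuallyEq ?_, hneg⟩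
    filter_upwards [Ioi_mem_nhds hs] with s' hs'
    rw [hH s' t hs' ht, hIG s' t hs' ht]
  · obtain ⟨d', hd', hpos'⟩ := exists_hasDerivAt_rpow_mul_one_sub_comp_div_right_pos
      (q := ((n : ℝ) - α) / 2) hB hs ht hG hd
    refine ⟨d', hd'.congr_of_eventuallyEq ?_, hpos'⟩
    filter_upwards [Ioi_mem_nhds ht] with t' ht'
    rw [hH s t' hs ht', hIG s t' hs ht']
end

section
/- Regularity Lifting Lemma: Let V be a Hausdorff topological vector space with two extended norms ‖·‖_X, ‖·‖_Y : V → [0,∞] such that X = {v : ‖v‖_X < ∞} and Y = {v : ‖v‖_Y < ∞} are complete under the respective norms and convergence in X or in Y implies convergence in V. Let T : V → V be a map which is a contraction from X to X and from Y to Y. Suppose f ∈ X and there exists g ∈ X ∩ Y with f = Tf + g in X. Then f ∈ X ∩ Y. -/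
/-!
Iterate `S w = T w + g` starting from `g`; all iterates lie in `X ∩ Y`. Since `S f = f` and `S`
contracts `X`, the iterates converge to `f` in `X`. Since `S` contracts `Y`, consecutive iterates
approach each other geometrically in `Y`, so by completeness they converge in `Y` to some `w ∈ Y`.
Both convergences hold in `V`, which is Hausdorff, hence `f = w ∈ Y`.
-/

open Filter Topology Set Function

section ExtendedNorm

variable {V : Type*} [AddCommGroup V] (N : V → ENNReal)

theorem ne_top_add (hadd : ∀ u v, N (u + v) ≤ N u + N v) {u v : V}
    (hu : N u ≠ ⊤) (hv : N v ≠ ⊤) : N (u + v) ≠ ⊤ :=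
  ne_top_of_le_ne_top (ENNReal.add_ne_top.2 ⟨hu, hv⟩) (hadd u v)

theorem ne_top_sub (hadd : ∀ u v, N (u + v) ≤ N u + N v) (hneg : ∀ u, N (-u) = N u) {u v : V}
    (hu : N u ≠ ⊤) (hv : N v ≠ ⊤) : N (u - v) ≠ ⊤ :=
  sub_eq_add_neg u v ▸ ne_top_add N hadd hu ((hneg v).symm ▸ hv)

/-- Not an instance: `V` carries its own topology, which this uniformity need not induce. -/
noncomputable abbrev pseudoEMetricSpaceOfENorm (h0 : N 0 = 0) (hneg : ∀ u, N (-u) = N u)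
    (hadd : ∀ u v, N (u + v) ≤ N u + N v) : PseudoEMetricSpace V where
  edist u v := N (u - v)
  edist_self u := by simp only [sub_self, h0]
  edist_comm u v := by rw [← hneg, neg_sub]
  edist_triangle u v w := by simpa only [sub_add_sub_cancel] using hadd (u - v) (v - w)

theorem cauchy_of_sub_succ_le_geometric (h0 : N 0 = 0) (hneg : ∀ u, N (-u) = N u)
    (hadd : ∀ u v, N (u + v) ≤ N u + N v) {C θ : ENNReal} (hC : C ≠ ⊤) (hθ : θ < 1)
    {u : ℕ → V} (hu : ∀ k, N (u k - u (k + 1)) ≤ C * θ ^ k) :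
    ∀ ε : ENNReal, 0 < ε → ∃ n, ∀ j ≥ n, ∀ k ≥ n, N (u j - u k) < ε := by
  let _ := pseudoEMetricSpaceOfENorm N h0 hneg hadd
  exact EMetric.cauchySeq_iff.1 (cauchySeq_of_edist_le_geometric (f := u) θ C hθ hC hu)

variable {N} {S : V → V} {θ : ENNReal}

theorem iterate_sub_le (hS : MapsTo S {v | N v ≠ ⊤} {v | N v ≠ ⊤})
    (hSN : ∀ u v, N u ≠ ⊤ → N v ≠ ⊤ → N (S u - S v) ≤ θ * N (u - v))
    {x y : V} (hx : N x ≠ ⊤) (hy : N y ≠ ⊤) (k : ℕ) :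
    N (S^[k] x - S^[k] y) ≤ θ ^ k * N (x - y) := by
  induction k with
  | zero => simp
  | succ k ih =>
    calc N (S^[k + 1] x - S^[k + 1] y)
        = N (S (S^[k] x) - S (S^[k] y)) := by rw [iterate_succ_apply', iterate_succ_apply']
      _ ≤ θ * N (S^[k] x - S^[k] y) := hSN _ _ (hS.iterate k hx) (hS.iterate k hy)
      _ ≤ θ * (θ ^ k * N (x - y)) := by gcongr
      _ = θ ^ (k + 1) * N (x - y) := by ring

theorem tendsto_iterate_sub_of_isFixedPt (hadd : ∀ u v, N (u + v) ≤ N u + N v)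
    (hneg : ∀ u, N (-u) = N u) (hθ : θ < 1) (hS : MapsTo S {v | N v ≠ ⊤} {v | N v ≠ ⊤})
    (hSN : ∀ u v, N u ≠ ⊤ → N v ≠ ⊤ → N (S u - S v) ≤ θ * N (u - v))
    {x f : V} (hx : N x ≠ ⊤) (hf : N f ≠ ⊤) (hfix : IsFixedPt S f) :
    Tendsto (fun k => N (S^[k] x - f)) atTop (𝓝 0) := by
  have hbound : ∀ k, N (S^[k] x - f) ≤ θ ^ k * N (x - f) := fun k => by
    simpa only [(hfix.iterate k).eq] using iterate_sub_le hS hSN hx hf k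
  have hlim : Tendsto (fun k : ℕ => θ ^ k * N (x - f)) atTop (𝓝 0) := by
    simpa using ENNReal.Tendsto.mul_const (ENNReal.tendsto_pow_atTop_nhds_zero_of_lt_one hθ)
      (Or.inr (ne_top_sub N hadd hneg hx hf))
  exact tendsto_of_tendsto_of_tendsto_of_le_of_le tendsto_const_nhds hlim (fun _ => zero_le) hbound

theorem exists_tendsto_iterate_sub (h0 : N 0 = 0) (hneg : ∀ u, N (-u) = N u)
    (hadd : ∀ u v, N (u + v) ≤ N u + N v)
    (hcompl : ∀ u : ℕ → V, (∀ k, N (u k) ≠ ⊤) →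
      (∀ ε : ENNReal, 0 < ε → ∃ n, ∀ j ≥ n, ∀ k ≥ n, N (u j - u k) < ε) →
      ∃ v, N v ≠ ⊤ ∧ Tendsto (fun k => N (u k - v)) atTop (𝓝 0))
    (hθ : θ < 1) (hS : MapsTo S {v | N v ≠ ⊤} {v | N v ≠ ⊤})
    (hSN : ∀ u v, N u ≠ ⊤ → N v ≠ ⊤ → N (S u - S v) ≤ θ * N (u - v))
    {x : V} (hx : N x ≠ ⊤) :
    ∃ w, N w ≠ ⊤ ∧ Tendsto (fun k => N (S^[k] x - w)) atTop (𝓝 0) := by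
  have hstep : ∀ k, N (S^[k] x - S^[k + 1] x) ≤ N (x - S x) * θ ^ k := fun k => by
    rw [iterate_succ_apply, mul_comm]
    exact iterate_sub_le hS hSN hx (hS hx) k
  exact hcompl _ (fun k => hS.iterate k hx)
    (cauchy_of_sub_succ_le_geometric N h0 hneg hadd (ne_top_sub N hadd hneg hx (hS hx)) hθ hstep)

end ExtendedNorm

theorem stmt9_general {V : Type*} [AddCommGroup V] [TopologicalSpace V]
    [T2Space V]
    (NX NY : V → ENNReal)
    -- extended norm axioms
    (hNXadd : ∀ u v, NX (u + v) ≤ NX u + NX v)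
    (hNXneg : ∀ u, NX (-u) = NX u)
    (hNYadd : ∀ u v, NY (u + v) ≤ NY u + NY v)
    (hNYneg : ∀ u, NY (-u) = NY u) (hNY0 : NY 0 = 0)
    -- completeness of X and Y
    (complY : ∀ u : ℕ → V, (∀ k, NY (u k) ≠ ⊤) →
      (∀ ε : ENNReal, 0 < ε → ∃ N, ∀ j ≥ N, ∀ k ≥ N, NY (u j - u k) < ε) →
      ∃ v, NY v ≠ ⊤ ∧ Tendsto (fun k => NY (u k - v)) atTop (nhds 0))
    -- convergence in X or Y implies convergence in V
    (convX : ∀ (u : ℕ → V) (v : V),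
      Tendsto (fun k => NX (u k - v)) atTop (nhds 0) → Tendsto u atTop (nhds v))
    (convY : ∀ (u : ℕ → V) (v : V),
      Tendsto (fun k => NY (u k - v)) atTop (nhds 0) → Tendsto u atTop (nhds v))
    -- T a contraction from X to X and from Y to Y
    (T : V → V) (θ : ENNReal) (hθ : θ < 1)
    (hTmapX : ∀ u, NX u ≠ ⊤ → NX (T u) ≠ ⊤)
    (hTmapY : ∀ u, NY u ≠ ⊤ → NY (T u) ≠ ⊤)
    (hTX : ∀ u v, NX u ≠ ⊤ → NX v ≠ ⊤ → NX (T u - T v) ≤ θ * NX (u - v))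
    (hTY : ∀ u v, NY u ≠ ⊤ → NY v ≠ ⊤ → NY (T u - T v) ≤ θ * NY (u - v))
    (f g : V) (hf : NX f ≠ ⊤) (hgX : NX g ≠ ⊤) (hgY : NY g ≠ ⊤)
    (hfg : f = T f + g) :
    NX f ≠ ⊤ ∧ NY f ≠ ⊤ := by
  set S : V → V := fun w => T w + g
  have hSX : MapsTo S {v | NX v ≠ ⊤} {v | NX v ≠ ⊤} := fun u hu =>
    ne_top_add NX hNXadd (hTmapX u hu) hgX
  have hSY : MapsTo S {v | NY v ≠ ⊤} {v | NY v ≠ ⊤} := fun u hu =>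
    ne_top_add NY hNYadd (hTmapY u hu) hgY
  have hSNX : ∀ u v, NX u ≠ ⊤ → NX v ≠ ⊤ → NX (S u - S v) ≤ θ * NX (u - v) := by
    simpa only [S, add_sub_add_right_eq_sub] using hTX
  have hSNY : ∀ u v, NY u ≠ ⊤ → NY v ≠ ⊤ → NY (S u - S v) ≤ θ * NY (u - v) := by
    simpa only [S, add_sub_add_right_eq_sub] using hTY
  have hfX := tendsto_iterate_sub_of_isFixedPt hNXadd hNXneg hθ hSX hSNX hgX hf hfg.symm
  obtain ⟨w, hwY, hwlim⟩ :=
    exists_tendsto_iterate_sub hNY0 hNYneg hNYadd complY hθ hSY hSNY hgY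
  have hfw : f = w := tendsto_nhds_unique (convX _ _ hfX) (convY _ _ hwlim)
  exact ⟨hf, hfw ▸ hwY⟩

/-- Regularity Lifting Lemma: V a Hausdorff topological vector space with two extended
norms ‖·‖_X, ‖·‖_Y whose finiteness subspaces X, Y are complete, and convergence in
X or Y implies convergence in V. If T is a contraction from X to X and from Y to Y,
f ∈ X, g ∈ X ∩ Y, and f = Tf + g, then f ∈ X ∩ Y. -/
theorem stmt9 {V : Type*} [AddCommGroup V] [Module ℝ V] [TopologicalSpace V]
    [T2Space V] [IsTopologicalAddGroup V] [ContinuousSMul ℝ V]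
    (NX NY : V → ENNReal)
    -- extended norm axioms
    (hNXadd : ∀ u v, NX (u + v) ≤ NX u + NX v)
    (hNXneg : ∀ u, NX (-u) = NX u) (hNX0 : NX 0 = 0)
    (hNYadd : ∀ u v, NY (u + v) ≤ NY u + NY v)
    (hNYneg : ∀ u, NY (-u) = NY u) (hNY0 : NY 0 = 0)
    -- completeness of X and Y
    (complX : ∀ u : ℕ → V, (∀ k, NX (u k) ≠ ⊤) →
      (∀ ε : ENNReal, 0 < ε → ∃ N, ∀ j ≥ N, ∀ k ≥ N, NX (u j - u k) < ε) →
      ∃ v, NX v ≠ ⊤ ∧ Tendsto (fun k => NX (u k - v)) atTop (nhds 0))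
    (complY : ∀ u : ℕ → V, (∀ k, NY (u k) ≠ ⊤) →
      (∀ ε : ENNReal, 0 < ε → ∃ N, ∀ j ≥ N, ∀ k ≥ N, NY (u j - u k) < ε) →
      ∃ v, NY v ≠ ⊤ ∧ Tendsto (fun k => NY (u k - v)) atTop (nhds 0))
    -- convergence in X or Y implies convergence in V
    (convX : ∀ (u : ℕ → V) (v : V),
      Tendsto (fun k => NX (u k - v)) atTop (nhds 0) → Tendsto u atTop (nhds v))
    (convY : ∀ (u : ℕ → V) (v : V),
      Tendsto (fun k => NY (u k - v)) atTop (nhds 0) → Tendsto u atTop (nhds v))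
    -- T a contraction from X to X and from Y to Y
    (T : V → V) (θ : ENNReal) (hθ : θ < 1)
    (hTmapX : ∀ u, NX u ≠ ⊤ → NX (T u) ≠ ⊤)
    (hTmapY : ∀ u, NY u ≠ ⊤ → NY (T u) ≠ ⊤)
    (hTX : ∀ u v, NX u ≠ ⊤ → NX v ≠ ⊤ → NX (T u - T v) ≤ θ * NX (u - v))
    (hTY : ∀ u v, NY u ≠ ⊤ → NY v ≠ ⊤ → NY (T u - T v) ≤ θ * NY (u - v))
    (f g : V) (hf : NX f ≠ ⊤) (hgX : NX g ≠ ⊤) (hgY : NY g ≠ ⊤)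
    (hfg : f = T f + g) :
    NX f ≠ ⊤ ∧ NY f ≠ ⊤ :=
  stmt9_general NX NY hNXadd hNXneg hNYadd hNYneg hNY0 complY convX convY T θ hθ hTmapX hTmapY hTX
    hTY f g hf hgX hgY hfg
end

section
/- Asymptotics of the half-space Green's function for fixed t: Let n ≥ 3, 0 < α < 2, B = (∫₀^∞ db/(b^{α/2}(1+b)))^{-1}, and for λ > 0 set F(λ) = 1 - B·(1+λ)^{-(n-2)/2} ∫₀^{1/λ} (1 - λb)^{(n-2)/2}/(b^{α/2}(1+b)) db. Then there exist constants 0 < c ≤ C and λ₀ > 0 such that c·λ^{α/2} ≤ F(λ) ≤ C·λ^{α/2} for all 0 < λ < λ₀. -/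
/-!
Write `a = α / 2`, `m = (n - 2) / 2`, `I = B⁻¹` and `u = (1 - λb) / (1 + λ)`. Splitting `I` at
`1 / λ` gives
`I · F(λ) = ∫₀^{1/λ} (1 - u^m) b^{-a} / (1 + b) db + ∫_{1/λ}^∞ b^{-a} / (1 + b) db`.
Both terms are nonnegative. The tail is comparable to `λ^a`, since `b^{-a} / (1 + b) ≍ b^{-a-1}`
for `b ≥ 1`. For the first term, `1 - u^m ≤ max m 1 · (1 - u) = max m 1 · λ (1 + b) / (1 + λ)`
bounds it by `max m 1 · λ ∫₀^{1/λ} b^{-a} db = max m 1 · λ^a / (1 - a)`.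
-/

open MeasureTheory Set intervalIntegral

lemma one_sub_rpow_le_max_mul_one_sub {u : ℝ} (hu0 : 0 ≤ u) (hu1 : u ≤ 1) (m : ℝ) :
    1 - u ^ m ≤ max m 1 * (1 - u) := by
  rcases le_total m 1 with hm | hm
  · rw [max_eq_right hm]
    linarith [Real.self_le_rpow_of_le_one hu0 hu1 hm]
  · rw [max_eq_left hm]
    have := one_add_mul_self_le_rpow_one_add (s := u - 1) (by linarith) hm
    rw [add_sub_cancel] at this
    linarith

section Weight

variable {a : ℝ}

lemma integral_Ioi_rpow_neg_sub_one (ha : 0 < a) {r : ℝ} (hr : 0 < r) :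
    ∫ b in Ioi r, b ^ (-a - 1) = r ^ (-a) / a := by
  rw [integral_Ioi_rpow_of_lt (by linarith) hr, sub_add_cancel, div_neg, neg_div, neg_neg]

lemma continuousOn_rpow_neg_mul_inv_one_add (a : ℝ) :
    ContinuousOn (fun b : ℝ => b ^ (-a) * (1 + b)⁻¹) (Ioi 0) := by
  fun_prop (disch := intros; simp_all; positivity)

lemma rpow_neg_mul_inv_one_add_le {b : ℝ} (hb : 0 < b) :
    b ^ (-a) * (1 + b)⁻¹ ≤ b ^ (-a - 1) := by
  rw [Real.rpow_sub_one hb.ne', div_eq_mul_inv]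
  gcongr
  linarith

lemma rpow_neg_sub_one_le_two_mul {b : ℝ} (hb : 1 ≤ b) :
    b ^ (-a - 1) ≤ 2 * (b ^ (-a) * (1 + b)⁻¹) := by
  have hb0 : 0 < b := by linarith
  rw [Real.rpow_sub_one hb0.ne', div_eq_mul_inv, mul_left_comm, ← div_eq_mul_inv 2]
  gcongr
  rw [le_div_iff₀ (by linarith), inv_mul_eq_div, div_le_iff₀ hb0]
  linarith

lemma integrableOn_Ioi_rpow_neg_mul_inv_one_add (ha : 0 < a) {r : ℝ} (hr : 0 < r) :
    IntegrableOn (fun b : ℝ => b ^ (-a) * (1 + b)⁻¹) (Ioi r) := by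
  refine (integrableOn_Ioi_rpow_of_lt (a := -a - 1) (by linarith) hr).mono'
    (((continuousOn_rpow_neg_mul_inv_one_add a).mono (Ioi_subset_Ioi hr.le)).aestronglyMeasurable
      measurableSet_Ioi) ?_
  filter_upwards [ae_restrict_mem measurableSet_Ioi] with b hb
  have hb0 : 0 < b := hr.trans hb
  rw [Real.norm_of_nonneg (by positivity)]
  exact rpow_neg_mul_inv_one_add_le hb0

lemma integrableOn_Ioc_rpow_neg_mul_inv_one_add (ha : a < 1) (r : ℝ) :
    IntegrableOn (fun b : ℝ => b ^ (-a) * (1 + b)⁻¹) (Ioc 0 r) := by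
  refine (intervalIntegrable_rpow' (a := 0) (b := r)
    (by linarith : -1 < -a)).1.mono' (((continuousOn_rpow_neg_mul_inv_one_add a).mono
      Ioc_subset_Ioi_self).aestronglyMeasurable measurableSet_Ioc) ?_
  filter_upwards [ae_restrict_mem measurableSet_Ioc] with b ⟨hb0, _⟩
  rw [Real.norm_of_nonneg (by positivity)]
  exact mul_le_of_le_one_right (by positivity) (inv_le_one_of_one_le₀ (by linarith))

lemma integrableOn_Ioi_zero_rpow_neg_mul_inv_one_add (ha0 : 0 < a) (ha1 : a < 1) :
    IntegrableOn (fun b : ℝ => b ^ (-a) * (1 + b)⁻¹) (Ioi 0) := by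
  rw [← Ioc_union_Ioi_eq_Ioi zero_le_one]
  exact (integrableOn_Ioc_rpow_neg_mul_inv_one_add ha1 1).union
    (integrableOn_Ioi_rpow_neg_mul_inv_one_add ha0 one_pos)

lemma setIntegral_Ioi_rpow_neg_mul_inv_one_add_le (ha : 0 < a) {r : ℝ} (hr : 0 < r) :
    ∫ b in Ioi r, b ^ (-a) * (1 + b)⁻¹ ≤ r ^ (-a) / a := by
  rw [← integral_Ioi_rpow_neg_sub_one ha hr]
  exact setIntegral_mono_on (integrableOn_Ioi_rpow_neg_mul_inv_one_add ha hr)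
    (integrableOn_Ioi_rpow_of_lt (by linarith) hr) measurableSet_Ioi
    fun b hb => rpow_neg_mul_inv_one_add_le (hr.trans hb)

lemma le_setIntegral_Ioi_rpow_neg_mul_inv_one_add (ha : 0 < a) {r : ℝ} (hr : 1 ≤ r) :
    r ^ (-a) / (2 * a) ≤ ∫ b in Ioi r, b ^ (-a) * (1 + b)⁻¹ := by
  have hr0 : 0 < r := by linarith
  rw [mul_comm, ← div_div, ← integral_Ioi_rpow_neg_sub_one ha hr0, div_le_iff₀' two_pos,
    ← MeasureTheory.integral_const_mul]
  exact setIntegral_mono_on (integrableOn_Ioi_rpow_of_lt (by linarith) hr0)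
    ((integrableOn_Ioi_rpow_neg_mul_inv_one_add ha hr0).const_mul 2) measurableSet_Ioi
    fun b hb => rpow_neg_sub_one_le_two_mul (hr.trans (le_of_lt hb))

lemma integral_Ioi_zero_rpow_neg_mul_inv_one_add_pos (ha0 : 0 < a) (ha1 : a < 1) :
    0 < ∫ b in Ioi (0 : ℝ), b ^ (-a) * (1 + b)⁻¹ :=
  calc (0 : ℝ) < 1 ^ (-a) / (2 * a) := by positivity
    _ ≤ ∫ b in Ioi 1, b ^ (-a) * (1 + b)⁻¹ :=
      le_setIntegral_Ioi_rpow_neg_mul_inv_one_add ha0 le_rfl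
    _ ≤ ∫ b in Ioi 0, b ^ (-a) * (1 + b)⁻¹ := by
      refine setIntegral_mono_set (integrableOn_Ioi_zero_rpow_neg_mul_inv_one_add ha0 ha1) ?_
        (Ioi_subset_Ioi zero_le_one).eventuallyLE
      filter_upwards [ae_restrict_mem measurableSet_Ioi] with b (hb : 0 < b)
      positivity

end Weight

/-- `halfSpaceDefect (α / 2) ((n - 2) / 2) λ = B⁻¹ · F(λ)`. -/
noncomputable def halfSpaceDefect (a m lam : ℝ) : ℝ :=
  (∫ b in Ioi (0 : ℝ), b ^ (-a) * (1 + b)⁻¹) -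
    (1 + lam) ^ (-m) * ∫ b in (0 : ℝ)..(1 / lam), (1 - lam * b) ^ m / (b ^ a * (1 + b))

noncomputable def defectDensity (a m lam b : ℝ) : ℝ :=
  (1 - ((1 - lam * b) / (1 + lam)) ^ m) * (b ^ (-a) * (1 + b)⁻¹)

section Defect

variable {a m lam b : ℝ}

lemma one_sub_mul_nonneg_of_mem_Ioc (hlam : 0 < lam) (hb : b ∈ Ioc 0 (1 / lam)) :
    0 ≤ 1 - lam * b :=
  sub_nonneg.2 ((le_div_iff₀' hlam).1 hb.2)

lemma one_sub_mul_div_one_add_mem_Icc (hlam : 0 < lam) (hb : b ∈ Ioc 0 (1 / lam)) :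
    (1 - lam * b) / (1 + lam) ∈ Icc 0 1 := by
  have := one_sub_mul_nonneg_of_mem_Ioc hlam hb
  have := hb.1
  constructor
  · exact div_nonneg (by linarith) (by linarith)
  · rw [div_le_one (by linarith)]; nlinarith

lemma defectDensity_nonneg (hm : 0 ≤ m) (hlam : 0 < lam) (hb : b ∈ Ioc 0 (1 / lam)) :
    0 ≤ defectDensity a m lam b := by
  obtain ⟨hu0, hu1⟩ := one_sub_mul_div_one_add_mem_Icc hlam hb
  have := Real.rpow_le_one hu0 hu1 hm
  have := hb.1
  exact mul_nonneg (by linarith) (by positivity)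

lemma defectDensity_le (hlam : 0 < lam) (hb : b ∈ Ioc 0 (1 / lam)) :
    defectDensity a m lam b ≤ max m 1 * lam * b ^ (-a) := by
  obtain ⟨hu0, hu1⟩ := one_sub_mul_div_one_add_mem_Icc hlam hb
  have := hb.1
  calc defectDensity a m lam b
      ≤ max m 1 * (1 - (1 - lam * b) / (1 + lam)) * (b ^ (-a) * (1 + b)⁻¹) := by
        unfold defectDensity
        gcongr
        exact one_sub_rpow_le_max_mul_one_sub hu0 hu1 m
    _ = max m 1 * lam * b ^ (-a) * (1 + lam)⁻¹ := by
        field_simp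
        ring
    _ ≤ max m 1 * lam * b ^ (-a) := by
        refine mul_le_of_le_one_right ?_ (inv_le_one_of_one_le₀ (by linarith))
        positivity

lemma integrableOn_rpow_mul_rpow_neg_mul_inv_one_add (ha : a < 1) (hm : 0 ≤ m) (hlam : 0 < lam) :
    IntegrableOn (fun b => ((1 - lam * b) / (1 + lam)) ^ m * (b ^ (-a) * (1 + b)⁻¹))
      (Ioc 0 (1 / lam)) := by
  refine (integrableOn_Ioc_rpow_neg_mul_inv_one_add ha _).bdd_mul (c := 1) ?_ ?_
  · exact Continuous.aestronglyMeasurable (by fun_prop (disch := exact hm))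
  · filter_upwards [ae_restrict_mem measurableSet_Ioc] with b hb
    obtain ⟨hu0, hu1⟩ := one_sub_mul_div_one_add_mem_Icc hlam hb
    rw [Real.norm_of_nonneg (Real.rpow_nonneg hu0 m)]
    exact Real.rpow_le_one hu0 hu1 hm

lemma integral_defectDensity_nonneg (hm : 0 ≤ m) (hlam : 0 < lam) :
    0 ≤ ∫ b in Ioc 0 (1 / lam), defectDensity a m lam b :=
  setIntegral_nonneg measurableSet_Ioc fun _ hb => defectDensity_nonneg hm hlam hb

lemma integral_defectDensity_le (ha : a < 1) (hm : 0 ≤ m) (hlam : 0 < lam) :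
    ∫ b in Ioc 0 (1 / lam), defectDensity a m lam b ≤ max m 1 * lam ^ a / (1 - a) := by
  have hr : 0 ≤ 1 / lam := by positivity
  have hrpow : IntegrableOn (fun b : ℝ => b ^ (-a)) (Ioc 0 (1 / lam)) :=
    (intervalIntegrable_rpow' (by linarith)).1
  calc _ ≤ ∫ b in Ioc 0 (1 / lam), max m 1 * lam * b ^ (-a) := by
        have hdef := (integrableOn_Ioc_rpow_neg_mul_inv_one_add ha (1 / lam)).sub
          (integrableOn_rpow_mul_rpow_neg_mul_inv_one_add ha hm hlam)
        refine setIntegral_mono_on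
          (hdef.congr_fun (fun b _ => by rw [Pi.sub_apply, defectDensity]; ring) measurableSet_Ioc)
          (hrpow.const_mul _) measurableSet_Ioc fun b hb => defectDensity_le hlam hb
    _ = max m 1 * lam * ((1 / lam) ^ (1 - a) / (1 - a)) := by
        rw [MeasureTheory.integral_const_mul, ← integral_of_le hr,
          integral_rpow (Or.inl (by linarith)), Real.zero_rpow (by linarith), neg_add_eq_sub]
        ring
    _ = max m 1 * lam ^ a / (1 - a) := by
        rw [one_div, Real.inv_rpow hlam.le, ← Real.rpow_neg hlam.le, neg_sub,
          Real.rpow_sub_one hlam.ne']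
        field_simp

lemma halfSpaceDefect_eq (ha0 : 0 < a) (ha1 : a < 1) (hm : 0 ≤ m) (hlam : 0 < lam) :
    halfSpaceDefect a m lam =
      (∫ b in Ioc 0 (1 / lam), defectDensity a m lam b) +
        ∫ b in Ioi (1 / lam), b ^ (-a) * (1 + b)⁻¹ := by
  have hr : 0 < 1 / lam := by positivity
  have hg := integrableOn_Ioc_rpow_neg_mul_inv_one_add ha1 (1 / lam)
  have hscaled : (1 + lam) ^ (-m) *
        ∫ b in (0 : ℝ)..(1 / lam), (1 - lam * b) ^ m / (b ^ a * (1 + b)) =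
      ∫ b in Ioc 0 (1 / lam), ((1 - lam * b) / (1 + lam)) ^ m * (b ^ (-a) * (1 + b)⁻¹) := by
    rw [integral_of_le hr.le, ← MeasureTheory.integral_const_mul]
    refine setIntegral_congr_fun measurableSet_Ioc fun b hb => ?_
    rw [Real.div_rpow (one_sub_mul_nonneg_of_mem_Ioc hlam hb) (by linarith),
      Real.rpow_neg hb.1.le, Real.rpow_neg (by linarith)]
    field_simp
  rw [halfSpaceDefect, hscaled, ← Ioc_union_Ioi_eq_Ioi hr.le,
    setIntegral_union (Ioc_disjoint_Ioi le_rfl) measurableSet_Ioi hg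
      (integrableOn_Ioi_rpow_neg_mul_inv_one_add ha0 hr)]
  simp only [defectDensity, sub_mul, one_mul]
  rw [integral_sub hg (integrableOn_rpow_mul_rpow_neg_mul_inv_one_add ha1 hm hlam)]
  ring

lemma halfSpaceDefect_bounds (ha0 : 0 < a) (ha1 : a < 1) (hm : 0 ≤ m) (hlam : 0 < lam)
    (hlam1 : lam ≤ 1) :
    1 / (2 * a) * lam ^ a ≤ halfSpaceDefect a m lam ∧
      halfSpaceDefect a m lam ≤ (max m 1 / (1 - a) + 1 / a) * lam ^ a := by
  have hpow : (1 / lam) ^ (-a) = lam ^ a := by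
    rw [one_div, Real.inv_rpow hlam.le, ← Real.rpow_neg hlam.le, neg_neg]
  have hT_lb := le_setIntegral_Ioi_rpow_neg_mul_inv_one_add ha0 (one_le_one_div hlam hlam1)
  have hT_ub := setIntegral_Ioi_rpow_neg_mul_inv_one_add_le ha0 (one_div_pos.2 hlam)
  rw [hpow] at hT_lb hT_ub
  rw [halfSpaceDefect_eq ha0 ha1 hm hlam, one_div_mul_eq_div, add_mul, div_mul_eq_mul_div,
    one_div_mul_eq_div]
  exact ⟨by linarith [integral_defectDensity_nonneg (a := a) hm hlam],
    add_le_add (integral_defectDensity_le ha1 hm hlam) hT_ub⟩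

end Defect

/-- Asymptotics of the half-space Green's function factor:
F(λ) = 1 - B (1+λ)^{-(n-2)/2} ∫₀^{1/λ}(1-λb)^{(n-2)/2}/(b^{α/2}(1+b)) db with
B = (∫₀^∞ db/(b^{α/2}(1+b)))⁻¹ satisfies F(λ) ≍ λ^{α/2} as λ → 0⁺. -/
theorem stmt14 (n : ℕ) (hn : 3 ≤ n) (α B : ℝ) (hα : α ∈ Set.Ioo (0 : ℝ) 2)
    (hB : B = (∫ b in Set.Ioi (0 : ℝ), b ^ (-(α / 2)) * (1 + b)⁻¹)⁻¹)
    (F : ℝ → ℝ)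
    (hF : ∀ lam : ℝ, 0 < lam →
      F lam = 1 - B * (1 + lam) ^ (-(((n : ℝ) - 2) / 2)) *
        ∫ b in (0 : ℝ)..(1 / lam),
          (1 - lam * b) ^ (((n : ℝ) - 2) / 2) / (b ^ (α / 2) * (1 + b))) :
    ∃ c C lam₀ : ℝ, 0 < c ∧ c ≤ C ∧ 0 < lam₀ ∧
      ∀ lam : ℝ, 0 < lam → lam < lam₀ →
        c * lam ^ (α / 2) ≤ F lam ∧ F lam ≤ C * lam ^ (α / 2) := by
  have ha0 : 0 < α / 2 := by linarith [hα.1]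
  have ha1 : α / 2 < 1 := by linarith [hα.2]
  have hm : 0 ≤ ((n : ℝ) - 2) / 2 := by
    have : (3 : ℝ) ≤ n := by exact_mod_cast hn
    linarith
  set a := α / 2
  set m := ((n : ℝ) - 2) / 2
  have hI := integral_Ioi_zero_rpow_neg_mul_inv_one_add_pos ha0 ha1
  have hB0 : 0 < B := hB ▸ inv_pos.2 hI
  refine ⟨B * (1 / (2 * a)), B * (max m 1 / (1 - a) + 1 / a), 1, by positivity, ?_, one_pos,
    fun lam hlam hlam1 => ?_⟩
  · have : 1 / (2 * a) ≤ 1 / a := one_div_le_one_div_of_le ha0 (by linarith)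
    have : 0 ≤ max m 1 / (1 - a) := div_nonneg (le_max_of_le_right zero_le_one) (by linarith)
    gcongr
    linarith
  have hF' : F lam = B * halfSpaceDefect a m lam := by
    rw [hF lam hlam, halfSpaceDefect, mul_sub, hB, inv_mul_cancel₀ hI.ne', mul_assoc]
  obtain ⟨hlow, hupp⟩ := halfSpaceDefect_bounds ha0 ha1 hm hlam hlam1.le
  rw [hF', mul_assoc, mul_assoc]
  exact ⟨by gcongr, by gcongr⟩
end

section
/- Iteration lower bound in the nonexistence proof: Let 0 < α < 2 and 1 < p ≤ (n+α)/(n-α) with n ≥ 3, and let m be an integer with m ≥ ⌊(3 - α²)/α⌋ + 1. Then τ(p) := [p^m(α/2 - 1) + α(p^m - 1)/(p - 1)]·p + α/2 ≥ 0. -/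
/-!
Multiplying by `p - 1` and summing the geometric series turns the quantity into
`c · (1 + p + ⋯ + pᵐ) - 1` with `c = α/2·(p+1) - (p-1)`. Since `p - 1 ≤ 2α/(n-α) ≤ 2α/(3-α)`,
one gets `c ≥ α/(3-α)`, and the geometric sum is at least `m + 1`; the bound on `m` is exactly
what makes `(m+1)·α/(3-α) ≥ 1`.
-/

open Finset

lemma natCast_le_geom_sum {R : Type*} [Semiring R] [PartialOrder R] [IsOrderedRing R]
    {x : R} (hx : 1 ≤ x) (n : ℕ) : (n : R) ≤ ∑ i ∈ range n, x ^ i := by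
  simpa using card_nsmul_le_sum (range n) (x ^ ·) 1 fun i _ => one_le_pow₀ hx

lemma tau_eq_mul_geom_sum_sub_one {p : ℝ} (hp : p ≠ 1) (α : ℝ) (m : ℕ) :
    (p ^ m * (α / 2 - 1) + α * (p ^ m - 1) / (p - 1)) * p + α / 2
      = (α / 2 * (p + 1) - (p - 1)) * ∑ k ∈ range (m + 1), p ^ k - 1 := by
  have hp' : p - 1 ≠ 0 := sub_ne_zero.mpr hp
  rw [geom_sum_eq hp]
  field_simp
  ring

lemma sub_one_mul_three_sub_le {n α p : ℝ} (hn : 3 ≤ n) (hα : α < 3) (hp1 : 1 ≤ p)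
    (hp2 : p ≤ (n + α) / (n - α)) : (p - 1) * (3 - α) ≤ 2 * α := by
  have hnα : 0 < n - α := by linarith
  have h : p * (n - α) ≤ n + α := (le_div_iff₀ hnα).mp hp2
  nlinarith [mul_le_mul_of_nonneg_left (by linarith : 3 - α ≤ n - α) (sub_nonneg.mpr hp1)]

lemma div_three_sub_le_coeff {α p : ℝ} (hα : α ≤ 2) (hp : (p - 1) * (3 - α) ≤ 2 * α) :
    α / (3 - α) ≤ α / 2 * (p + 1) - (p - 1) := by
  rw [div_le_iff₀ (by linarith)]
  nlinarith [mul_le_mul_of_nonneg_left hp (by linarith : (0 : ℝ) ≤ 1 - α / 2)]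

lemma three_sub_le_succ_mul_of_floor_lt {α : ℝ} {m : ℕ} (hα0 : 0 < α) (hα2 : α ≤ 2)
    (hm : ⌊(3 - α ^ 2) / α⌋ + 1 ≤ (m : ℤ)) : 3 - α ≤ (m + 1) * α := by
  have hfloor : (3 - α ^ 2) / α < m := by
    have : ((⌊(3 - α ^ 2) / α⌋ + 1 : ℤ) : ℝ) ≤ m := by exact_mod_cast hm
    push_cast at this
    linarith [Int.lt_floor_add_one ((3 - α ^ 2) / α)]
  rw [div_lt_iff₀ hα0] at hfloor
  nlinarith

/-- Iteration lower bound: for 0 < α < 2, 1 < p ≤ (n+α)/(n-α), n ≥ 3, and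
m ≥ ⌊(3-α²)/α⌋ + 1, one has τ(p) = [pᵐ(α/2-1) + α(pᵐ-1)/(p-1)]·p + α/2 ≥ 0. -/
theorem stmt15 (n : ℕ) (hn : 3 ≤ n) (α p : ℝ) (hα : α ∈ Set.Ioo (0 : ℝ) 2)
    (hp1 : 1 < p) (hp2 : p ≤ ((n : ℝ) + α) / ((n : ℝ) - α))
    (m : ℕ) (hm : ⌊(3 - α ^ 2) / α⌋ + 1 ≤ (m : ℤ)) :
    0 ≤ (p ^ m * (α / 2 - 1) + α * (p ^ m - 1) / (p - 1)) * p + α / 2 := by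
  obtain ⟨hα0, hα2⟩ := hα
  have hcoeff : α / (3 - α) ≤ α / 2 * (p + 1) - (p - 1) :=
    div_three_sub_le_coeff hα2.le <|
      sub_one_mul_three_sub_le (by exact_mod_cast hn) (by linarith) hp1.le hp2
  have hsum : ((m + 1 : ℕ) : ℝ) ≤ ∑ k ∈ range (m + 1), p ^ k := natCast_le_geom_sum hp1.le _
  have hsucc := three_sub_le_succ_mul_of_floor_lt hα0 hα2.le hm
  have hone : 1 ≤ α / (3 - α) * (m + 1) := by
    rw [div_mul_eq_mul_div, le_div_iff₀ (by linarith)]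
    linarith
  rw [tau_eq_mul_geom_sum_sub_one hp1.ne' α m, sub_nonneg]
  push_cast at hsum
  calc 1 ≤ α / (3 - α) * (m + 1) := hone
    _ ≤ (α / 2 * (p + 1) - (p - 1)) * ∑ k ∈ range (m + 1), p ^ k :=
      mul_le_mul hcoeff hsum (by positivity) (by linarith [div_pos hα0 (by linarith : 0 < 3 - α)])
end
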